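/- For every positive integer a, every orbit of B_a enters the interval [1, 2a² + 10]: for every positive integer n there exists k ≥ 0 such that B_a^k(n) ≤ 2a² + 10. -/

import Mathlib

/-- `B n` is the sum of the prime divisors of `n` counted with multiplicity
(so `B 1 = 0`). -/
def B (n : ℕ) : ℕ := (Nat.primeFactorsList n).sum

/-- `Ba a n = n + a` if `n` is prime, and `B n` otherwise. -/
def Ba (a n : ℕ) : ℕ := if n.Prime then n + a else B n

/-!
Above `a² + a + 4` the orbit always comes back below its starting point `n`. Adding `a`
repeatedly cannot stay prime for long: `n + k a` is divisible by `a + 1` as soon as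
`k ≡ n (mod a + 1)`, so some `k ≤ a + 1` makes it composite. On a composite `m = x y` with
`x, y ≥ 2` we have `B m ≤ x + y ≤ m / 2 + 2`, and `(n + (a + 1) a) / 2 + 2 < n`.
-/

lemma B_prime {p : ℕ} (hp : p.Prime) : B p = p := by
  simp [B, Nat.primeFactorsList_prime hp]

lemma B_mul {m n : ℕ} (hm : m ≠ 0) (hn : n ≠ 0) : B (m * n) = B m + B n := by
  rw [B, (Nat.perm_primeFactorsList_mul hm hn).sum_eq, List.sum_append, B, B]

lemma exists_mul_eq_of_not_prime {n : ℕ} (hn : 2 ≤ n) (hp : ¬ n.Prime) :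
    ∃ x y, 2 ≤ x ∧ 2 ≤ y ∧ x * y = n := by
  obtain ⟨x, y, hx, hy, rfl⟩ := (Nat.not_prime_iff_exists_mul_eq hn).mp hp
  refine ⟨x, y, ?_, ?_, rfl⟩
  · rcases x with _ | _ | x <;> simp_all
  · rcases y with _ | _ | y <;> simp_all

lemma B_le_self (n : ℕ) : B n ≤ n := by
  induction n using Nat.strong_induction_on with
  | _ n ih =>
    rcases Nat.lt_or_ge n 2 with hn | hn
    · interval_cases n <;> simp [B]
    by_cases hp : n.Prime
    · exact (B_prime hp).le
    obtain ⟨x, y, hx, hy, rfl⟩ := exists_mul_eq_of_not_prime hn hp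
    have hxy : x < x * y := by nlinarith
    have hyx : y < x * y := by nlinarith
    rw [B_mul (by omega) (by omega)]
    nlinarith [ih x hxy, ih y hyx]

lemma two_mul_B_le_of_not_prime {n : ℕ} (hn : 2 ≤ n) (hp : ¬ n.Prime) :
    2 * B n ≤ n + 4 := by
  obtain ⟨x, y, hx, hy, rfl⟩ := exists_mul_eq_of_not_prime hn hp
  rw [B_mul (by omega) (by omega)]
  nlinarith [B_le_self x, B_le_self y]

lemma iterate_Ba_of_forall_prime {a n j : ℕ} (h : ∀ i < j, (n + i * a).Prime) :
    (Ba a)^[j] n = n + j * a := by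
  induction j with
  | zero => simp
  | succ j ih =>
    rw [Function.iterate_succ_apply', ih fun i hi => h i (by omega), Ba,
      if_pos (h j j.lt_succ_self)]
    ring

lemma exists_le_succ_not_prime_add_mul {a n : ℕ} (ha : 0 < a) (hn : 2 ≤ n) :
    ∃ k ≤ a + 1, ¬ (n + k * a).Prime := by
  obtain ⟨s, r, hr, rfl⟩ : ∃ s r, r < a + 1 ∧ n = (a + 1) * s + r + 1 :=
    ⟨(n - 1) / (a + 1), (n - 1) % (a + 1), Nat.mod_lt _ (by omega),
      by have := Nat.div_add_mod (n - 1) (a + 1); omega⟩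
  refine ⟨r + 1, hr, ?_⟩
  have hfac : (a + 1) * s + r + 1 + (r + 1) * a = (a + 1) * (s + r + 1) := by ring
  rw [hfac]
  refine Nat.not_prime_mul (by omega) ?_
  intro hs
  obtain ⟨rfl, rfl⟩ : s = 0 ∧ r = 0 := by omega
  omega

lemma exists_iterate_Ba_lt {a n : ℕ} (ha : 0 < a) (hn : a ^ 2 + a + 4 < n) :
    ∃ j, (Ba a)^[j] n < n := by
  have hex := exists_le_succ_not_prime_add_mul ha (show 2 ≤ n by omega)
  have hcomp : ∃ k, ¬ (n + k * a).Prime := hex.imp fun _ => And.right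
  set j := Nat.find hcomp
  have hj : j ≤ a + 1 := by
    obtain ⟨k, hk, hkp⟩ := hex
    exact (Nat.find_min' hcomp hkp).trans hk
  have hstep : (Ba a)^[j + 1] n = B (n + j * a) := by
    rw [Function.iterate_succ_apply',
      iterate_Ba_of_forall_prime fun i hi => not_not.mp (Nat.find_min hcomp hi), Ba,
      if_neg (Nat.find_spec hcomp)]
  have hB := two_mul_B_le_of_not_prime (by omega) (Nat.find_spec hcomp)
  have hja : j * a ≤ (a + 1) * a := Nat.mul_le_mul_right a hj
  exact ⟨j + 1, by rw [hstep]; nlinarith⟩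

theorem Ba_orbit_enters_interval_general (a : ℕ) (ha : 0 < a) (n : ℕ) :
    ∃ k : ℕ, (Ba a)^[k] n ≤ 2 * a ^ 2 + 10 := by
  induction n using Nat.strong_induction_on with
  | _ n ih =>
    by_cases hle : n ≤ 2 * a ^ 2 + 10
    · exact ⟨0, hle⟩
    obtain ⟨j, hj⟩ := exists_iterate_Ba_lt ha (show a ^ 2 + a + 4 < n by nlinarith)
    obtain ⟨k, hk⟩ := ih _ hj
    exact ⟨k + j, by rwa [Function.iterate_add_apply]⟩

/-- Every orbit of `B_a` enters the interval `[1, 2a² + 10]`. -/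
theorem Ba_orbit_enters_interval (a : ℕ) (ha : 0 < a) (n : ℕ) (hn : 0 < n) :
    ∃ k : ℕ, (Ba a)^[k] n ≤ 2 * a ^ 2 + 10 :=
  Ba_orbit_enters_interval_general a ha n
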